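/- arXiv:0805.2139 — 6 statements merged into one kernel-verified Lean document; each statement's English description precedes it below -/
import Mathlib

section
/- Let p be a prime and A ⊆ Z/pZ a set with |A| ≥ ⌊√(4p-7)⌋ + 1. Then with k = ⌊(⌊√(4p-7)⌋+1)/2⌋, every element of Z/pZ is a sum of some k-element subset of A; i.e., Σ_k(A) = Z/pZ. -/
/-- The set of all sums of `k`-element subsets of `A`. -/
def sigmaK {p : ℕ} (A : Finset (ZMod p)) (k : ℕ) : Finset (ZMod p) :=
  (A.powersetCard k).image (fun S => S.sum id)

/-!
Alon–Nathanson–Ruzsa polynomial method. Let `B₀, …, B_{k-1}` have distinct sizes `cᵢ + 1` and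
suppose every sum of an injective tuple `xᵢ ∈ Bᵢ` lies in `E`, where
`|E| + k(k-1)/2 = ∑ cᵢ` and `|E| < p`. Then `∏_{i<j} (xⱼ - xᵢ) · ∏_{e ∈ E} (∑ xᵢ - e)` vanishes
on `B₀ × ⋯ × B_{k-1}`, although its coefficient of `∏ xᵢ ^ cᵢ` is
`|E|! / ∏ cᵢ! · ∏_{i<j} (cⱼ - cᵢ) ≠ 0`; this contradicts the Combinatorial Nullstellensatz.
Taking `Bᵢ ⊆ A` with `|E| = min (p - 1) (k (|A| - k))` gives the Dias da Silva–Hamidoune bound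
`|Σ_k(A)| ≥ min p (k (|A| - k) + 1)`, and for `k = ⌊(s + 1) / 2⌋`, `s = ⌊√(4p - 7)⌋`, one has
`k (s + 1 - k) = ⌊(s + 1)² / 4⌋ ≥ p - 1`.
-/

open Finset MvPolynomial Matrix
open scoped Nat

lemma sq_le_four_mul_half_mul_sub_half (t : ℕ) : t * t ≤ 4 * (t / 2 * (t - t / 2)) + 1 := by
  obtain ⟨m, rfl | rfl⟩ := Nat.even_or_odd' t
  · rw [show 2 * m / 2 = m by omega, show 2 * m - m = m by omega]; ring_nf; omega
  · rw [show (2 * m + 1) / 2 = m by omega, show 2 * m + 1 - m = m + 1 by omega]; ring_nf; omega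

lemma sum_range_min_sub_mul (w D k : ℕ) :
    ∑ j ∈ range k, min w (D - j * w) = min D (k * w) := by
  induction k with
  | zero => simp
  | succ k ih => rw [sum_range_succ, ih, Nat.succ_mul]; omega

lemma exists_strictMono_sum_eq {k n D : ℕ} (hkn : k ≤ n) (hD : D ≤ k * (n - k)) :
    ∃ c : Fin k → ℕ, StrictMono c ∧ (∀ i, c i < n) ∧ ∑ i, c i = D + ∑ i : Fin k, (i : ℕ) := by
  set w := n - k
  -- fill the top coordinates with `w` first: `e = (0, …, 0, r, w, …, w)`
  set e : Fin k → ℕ := fun i => min w (D - (k - 1 - i) * w)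
  have he_mono : Monotone e := fun i j hij =>
    min_le_min_left w (Nat.sub_le_sub_left (Nat.mul_le_mul_right w (by omega)) D)
  have he_sum : ∑ i, e i = D := by
    rw [Fin.sum_univ_eq_sum_range (fun i => min w (D - (k - 1 - i) * w)),
      sum_range_reflect (fun j => min w (D - j * w)), sum_range_min_sub_mul]
    omega
  refine ⟨fun i => i + e i, fun i j hij => ?_, fun i => ?_, ?_⟩
  · have : e i ≤ e j := he_mono hij.le
    have : (i : ℕ) < j := hij
    show i + e i < j + e j
    omega
  · have : e i ≤ w := min_le_left _ _
    show i + e i < n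
    omega
  · rw [sum_add_distrib, he_sum, add_comm]

section

variable {R σ : Type*} [CommRing R]

lemma totalDegree_prod_sub_C_le (L : MvPolynomial σ R) (hL : L.totalDegree ≤ 1) (E : Finset R) :
    (∏ e ∈ E, (L - C e)).totalDegree ≤ #E :=
  (totalDegree_finsetProd _ _).trans <|
    (sum_le_card_nsmul _ _ 1 fun e _ => (totalDegree_sub_C_le L e).trans hL).trans (by simp)

lemma coeff_mul_prod_sub_C (L : MvPolynomial σ R) (hL : L.totalDegree ≤ 1) (E : Finset R)
    (g : MvPolynomial σ R) (t : σ →₀ ℕ) (ht : g.totalDegree + #E ≤ t.degree) :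
    coeff t (g * ∏ e ∈ E, (L - C e)) = coeff t (g * L ^ #E) := by
  classical
  induction E using Finset.induction_on generalizing g with
  | empty => simp
  | insert a E ha ih =>
    rw [card_insert_of_notMem ha] at ht
    have hLpow : (L ^ #E).totalDegree ≤ #E :=
      (totalDegree_pow _ _).trans (by simpa using Nat.mul_le_mul_left #E hL)
    have hgL : (g * L).totalDegree ≤ g.totalDegree + 1 :=
      (totalDegree_mul _ _).trans (by omega)
    have hlow : (g * L ^ #E).totalDegree < t.degree :=
      (totalDegree_mul _ _).trans_lt (by omega)
    have hsplit : g * ∏ e ∈ insert a E, (L - C e)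
        = g * L * ∏ e ∈ E, (L - C e) - C a * (g * ∏ e ∈ E, (L - C e)) := by
      rw [prod_insert ha]; ring
    rw [hsplit, coeff_sub, coeff_C_mul, ih (g * L) (by omega), ih g (by omega),
      coeff_eq_zero_of_totalDegree_lt hlow, mul_zero, sub_zero, mul_assoc,
      card_insert_of_notMem ha, pow_succ']

lemma factorial_mul_coeff_prod_X_pow_mul_sum_X_pow [Fintype σ] (a : σ → ℕ) (l : σ →₀ ℕ) {M : ℕ}
    (hl : l.degree = M + ∑ i, a i) :
    (∏ i, ((l i)! : R)) * coeff l ((∏ i, X i ^ a i) * (∑ i, X i) ^ M)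
      = M ! * ∏ i, ((l i).descFactorial (a i) : R) := by
  classical
  rw [prod_X_pow, coeff_monomial_mul']
  set a' : σ →₀ ℕ := Finsupp.indicator univ fun i _ => a i
  have ha' : ∀ i, a' i = a i := fun i => by simp [a']
  split_ifs with hal
  · have hal' : ∀ i, a i ≤ l i := fun i => ha' i ▸ hal i
    have hsum : ∑ i, (l - a') i = M := by
      simp only [Finsupp.tsub_apply, ha']
      rw [Finsupp.degree_eq_sum] at hl
      have := sum_tsub_distrib (s := univ) (f := fun i => l i) (g := a) (fun i _ => hal' i)
      omega
    rw [one_mul, coeff_sum_X_pow_of_fintype,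
      if_pos (by rwa [Finsupp.sum_fintype _ _ fun _ => rfl]),
      Finsupp.multinomial_eq_of_support_subset (subset_univ _)]
    have key : (∏ i, (l i)!) * Nat.multinomial univ (l - a')
        = M ! * ∏ i, (l i).descFactorial (a i) := by
      have hspec := Nat.multinomial_spec univ (l - a')
      simp only [Finsupp.tsub_apply, ha'] at hspec hsum
      rw [hsum] at hspec
      rw [← hspec, ← prod_congr rfl fun i _ => Nat.factorial_mul_descFactorial (hal' i),
        prod_mul_distrib]
      ring
    simpa using congrArg (Nat.cast : ℕ → R) key
  · obtain ⟨i, hi⟩ : ∃ i, l i < a i := by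
      simpa [Finsupp.le_def, ha'] using hal
    rw [mul_zero, prod_eq_zero (mem_univ i) (by rw [Nat.descFactorial_eq_zero_iff_lt.mpr hi,
      Nat.cast_zero]), mul_zero]

lemma totalDegree_det_vandermonde_X_le [Nontrivial R] {k : ℕ} :
    (vandermonde (X : Fin k → MvPolynomial (Fin k) R)).det.totalDegree ≤ ∑ i : Fin k, (i : ℕ) := by
  rw [det_apply]
  refine (totalDegree_finsetSum _ _).trans <| Finset.sup_le fun τ _ => ?_
  rw [Units.smul_def, zsmul_eq_mul]
  refine (totalDegree_mul _ _).trans ?_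
  rw [← map_intCast (C : R →+* MvPolynomial (Fin k) R), totalDegree_C, zero_add]
  refine (totalDegree_finsetProd _ _).trans <| sum_le_sum fun i _ => ?_
  rw [vandermonde_apply, totalDegree_X_pow]

lemma det_vandermonde_natCast_eq_det_descFactorial [IsDomain R] {k : ℕ} (l : Fin k → ℕ) :
    (vandermonde fun i => (l i : R)).det
      = (of fun i j : Fin k => ((l i).descFactorial j : R)).det := by
  rw [det_eval_matrixOfPolynomials_eq_det_vandermonde _ (fun j => descPochhammer R j)
    (fun j => descPochhammer_natDegree R j) (fun j => monic_descPochhammer R j)]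
  simp only [descPochhammer_eval_eq_descFactorial]

lemma factorial_mul_coeff_det_vandermonde_mul_sum_X_pow [IsDomain R] {k M : ℕ} (l : Fin k →₀ ℕ)
    (hl : l.degree = M + ∑ i : Fin k, (i : ℕ)) :
    (∏ i, ((l i)! : R)) * coeff l ((vandermonde (X : Fin k → MvPolynomial (Fin k) R)).det
      * (∑ i, X i) ^ M) = M ! * (vandermonde fun i => (l i : R)).det := by
  rw [det_vandermonde_natCast_eq_det_descFactorial, det_apply, det_apply, sum_mul, coeff_sum,
    mul_sum, mul_sum]
  refine sum_congr rfl fun τ _ => ?_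
  have hX : ∏ i, vandermonde (X : Fin k → MvPolynomial (Fin k) R) (τ i) i
      = ∏ j, X j ^ (τ.symm j : ℕ) := by
    rw [← Equiv.prod_comp τ (fun j => X j ^ (τ.symm j : ℕ))]; simp [vandermonde_apply]
  have hdesc : ∏ i, of (fun i j : Fin k => ((l i).descFactorial j : R)) (τ i) i
      = ∏ j, ((l j).descFactorial (τ.symm j) : R) := by
    rw [← Equiv.prod_comp τ (fun j => ((l j).descFactorial (τ.symm j) : R))]; simp
  have hsum : l.degree = M + ∑ j, (τ.symm j : ℕ) := by
    rw [hl, Equiv.sum_comp τ.symm (fun i : Fin k => (i : ℕ))]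
  rw [Units.smul_def, Units.smul_def, zsmul_eq_mul, zsmul_eq_mul, hX, hdesc, mul_assoc,
    ← map_intCast (C : R →+* MvPolynomial (Fin k) R), coeff_C_mul, mul_left_comm,
    factorial_mul_coeff_prod_X_pow_mul_sum_X_pow _ _ hsum, mul_left_comm]

end

section ZMod

variable {p : ℕ} [Fact p.Prime]

lemma coeff_det_vandermonde_mul_sum_X_pow_ne_zero {k M : ℕ} (l : Fin k →₀ ℕ)
    (hl_inj : Function.Injective l) (hlp : ∀ i, l i < p) (hMp : M < p)
    (hl : l.degree = M + ∑ i : Fin k, (i : ℕ)) :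
    coeff l ((vandermonde (X : Fin k → MvPolynomial (Fin k) (ZMod p))).det
      * (∑ i, X i) ^ M) ≠ 0 := by
  intro h0
  have key := factorial_mul_coeff_det_vandermonde_mul_sum_X_pow (R := ZMod p) l hl
  rw [h0, mul_zero, eq_comm, mul_eq_zero] at key
  rcases key with hM | hV
  · rw [ZMod.natCast_eq_zero_iff, (Fact.out : p.Prime).dvd_factorial] at hM
    omega
  · refine det_vandermonde_ne_zero_iff.mpr (fun i j hij => hl_inj ?_) hV
    rwa [ZMod.natCast_eq_natCast_iff', Nat.mod_eq_of_lt (hlp i), Nat.mod_eq_of_lt (hlp j)] at hij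

theorem exists_mem_injective_sum_notMem {k : ℕ} (B : Fin k → Finset (ZMod p))
    (hB_inj : Function.Injective fun i => #(B i)) (hB : ∀ i, (B i).Nonempty)
    (E : Finset (ZMod p)) (hE : #E < p)
    (hsum : #E + ∑ i : Fin k, (i : ℕ) = ∑ i, (#(B i) - 1)) :
    ∃ x : Fin k → ZMod p, (∀ i, x i ∈ B i) ∧ Function.Injective x ∧ ∑ i, x i ∉ E := by
  classical
  set l : Fin k →₀ ℕ := Finsupp.equivFunOnFinite.symm fun i => #(B i) - 1
  have hl_apply : ∀ i, l i = #(B i) - 1 := fun i => rfl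
  have hB_pos : ∀ i, 0 < #(B i) := fun i => (hB i).card_pos
  have hl : l.degree = #E + ∑ i : Fin k, (i : ℕ) := by
    rw [Finsupp.degree_eq_sum, hsum]; rfl
  set V := (vandermonde (X : Fin k → MvPolynomial (Fin k) (ZMod p))).det
  set f := V * ∏ e ∈ E, (∑ i, X i - C e)
  have hS : (∑ i, X i : MvPolynomial (Fin k) (ZMod p)).totalDegree ≤ 1 :=
    (totalDegree_finsetSum _ _).trans <| Finset.sup_le fun i _ => (totalDegree_X i).le
  have hV : V.totalDegree ≤ ∑ i : Fin k, (i : ℕ) := totalDegree_det_vandermonde_X_le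
  have hcoeff : coeff l f ≠ 0 := by
    rw [coeff_mul_prod_sub_C _ hS _ _ _ (by omega)]
    refine coeff_det_vandermonde_mul_sum_X_pow_ne_zero l (fun i j hij => hB_inj ?_)
      (fun i => ?_) hE hl
    · have := hB_pos i; have := hB_pos j
      simp only [hl_apply] at hij
      show #(B i) = #(B j)
      omega
    · have := card_le_univ (B i)
      rw [ZMod.card] at this
      have := hB_pos i
      rw [hl_apply]
      omega
  have hdeg : f.totalDegree = l.degree := by
    refine le_antisymm ?_ (le_totalDegree (mem_support_iff.mpr hcoeff))
    calc f.totalDegree ≤ V.totalDegree + (∏ e ∈ E, (∑ i, X i - C e)).totalDegree :=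
          totalDegree_mul _ _
      _ ≤ ∑ i : Fin k, (i : ℕ) + #E := add_le_add hV (totalDegree_prod_sub_C_le _ hS E)
      _ = l.degree := by rw [hl, add_comm]
  obtain ⟨x, hxB, hx⟩ := combinatorial_nullstellensatz_exists_eval_nonzero f l hcoeff hdeg B
    fun i => by have := hB_pos i; rw [hl_apply]; omega
  rw [eval_mul] at hx
  refine ⟨x, hxB, ?_, fun hxE => right_ne_zero_of_mul hx ?_⟩
  · refine det_vandermonde_ne_zero_iff.mp ?_
    have : (eval x).mapMatrix (vandermonde X) = vandermonde x := by
      ext i j; simp [vandermonde_apply]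
    rw [← this, ← RingHom.map_det]
    exact left_ne_zero_of_mul hx
  · rw [map_prod]
    exact prod_eq_zero hxE (by simp)

end ZMod

lemma sum_mem_sigmaK {p k : ℕ} {A : Finset (ZMod p)} {x : Fin k → ZMod p} (hxA : ∀ i, x i ∈ A)
    (hx : Function.Injective x) : ∑ i, x i ∈ sigmaK A k := by
  classical
  refine mem_image.mpr ⟨univ.image x, mem_powersetCard.mpr ⟨?_, ?_⟩, ?_⟩
  · simpa [subset_iff] using hxA
  · rw [card_image_of_injective _ hx, card_univ, Fintype.card_fin]
  · rw [sum_image fun a _ b _ h => hx h]; rfl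

theorem min_le_card_sigmaK {p : ℕ} [Fact p.Prime] (A : Finset (ZMod p)) {k : ℕ} (hk : k ≤ #A) :
    min p (k * (#A - k) + 1) ≤ #(sigmaK A k) := by
  classical
  by_contra! h
  have hp := (Fact.out : p.Prime).two_le
  obtain ⟨E, hE, hEcard⟩ := exists_superset_card_eq (n := min (p - 1) (k * (#A - k)))
    (s := sigmaK A k) (by omega) (by rw [ZMod.card]; omega)
  obtain ⟨c, hc, hcA, hcsum⟩ := exists_strictMono_sum_eq hk (min_le_right (p - 1) _)
  choose B hBA hBc using fun i => exists_subset_card_eq (s := A) (n := c i + 1) (hcA i)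
  obtain ⟨x, hxB, hx, hxE⟩ := exists_mem_injective_sum_notMem B
    (fun i j hij => hc.injective (by simpa [hBc] using hij))
    (fun i => card_pos.mp (by rw [hBc]; omega)) E (by omega) (by simp [hBc, hEcard, hcsum])
  exact hxE (hE (sum_mem_sigmaK (fun i => hBA i (hxB i)) hx))

theorem ksubset_sums_cover (p : ℕ) [Fact p.Prime] (A : Finset (ZMod p))
    (hA : Nat.sqrt (4 * p - 7) + 1 ≤ A.card) :
    sigmaK A ((Nat.sqrt (4 * p - 7) + 1) / 2) = Finset.univ := by
  set t := Nat.sqrt (4 * p - 7) + 1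
  have ht : 4 * p - 7 < t * t := Nat.lt_succ_sqrt _
  have hsq := sq_le_four_mul_half_mul_sub_half t
  have hmono : t / 2 * (t - t / 2) ≤ t / 2 * (#A - t / 2) := Nat.mul_le_mul_left _ (by omega)
  have hcard := min_le_card_sigmaK A (k := t / 2) (by omega)
  refine eq_univ_of_card _ (le_antisymm (card_le_univ _) ?_)
  rw [ZMod.card]
  omega
end

section
/- For every prime p > 6000 and every set J of at least ⌈p/5⌉ distinct residues in {1, ..., p-1}, one has ∏_{j∈J} |cos(πj/p)| ≤ 1/p². -/
/-!
Since `cos x · exp (x² / 2)` decreases on `[0, π / 2]` (its derivative has the sign of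
`x cos x - sin x`), `|cos x| ≤ exp (-x² / 2)` for `|x| ≤ π / 2`. By the reflection `j ↦ p - j`,
`|cos (π j / p)|` is bounded by this with `x = π d / p`, `d = min j (p - j)`, so the product is
at most `exp (-(π / p)² / 2 · ∑ d²)`. Every value of `d` is taken at most twice, so a set of
`n ≥ p / 5` such `j` has `∑ d² ≥ n³ / 12 ≥ p³ / 1500`, and the product is at most
`exp (-π² p / 3000) ≤ p⁻²` once `p ≥ 6000`.
-/

open Real Finset

lemma Real.antitoneOn_cos_mul_exp_sq_div_two :
    AntitoneOn (fun x => cos x * exp (x ^ 2 / 2)) (Set.Icc 0 (π / 2)) := by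
  refine antitoneOn_of_deriv_nonpos (convex_Icc _ _) (by fun_prop) (by fun_prop) fun x hx => ?_
  rw [interior_Icc] at hx
  have hderiv : HasDerivAt (fun x => cos x * exp (x ^ 2 / 2))
      ((x * cos x - sin x) * exp (x ^ 2 / 2)) x := by
    refine ((hasDerivAt_cos x).fun_mul ((hasDerivAt_pow 2 x).div_const 2).exp).congr_deriv ?_
    push_cast
    ring
  have htan : x ≤ sin x / cos x := tan_eq_sin_div_cos x ▸ le_tan hx.1.le hx.2
  have hcos : 0 < cos x := cos_pos_of_mem_Ioo ⟨by linarith [hx.1, pi_pos], hx.2⟩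
  rw [hderiv.deriv]
  exact mul_nonpos_of_nonpos_of_nonneg (by rw [le_div_iff₀ hcos] at htan; linarith)
    (exp_pos _).le

lemma Real.abs_cos_le_exp_neg_sq_div_two {x : ℝ} (hx : |x| ≤ π / 2) :
    |cos x| ≤ exp (-(x ^ 2 / 2)) := by
  have hmem : |x| ∈ Set.Icc 0 (π / 2) := ⟨abs_nonneg x, hx⟩
  have h := antitoneOn_cos_mul_exp_sq_div_two ⟨le_rfl, by positivity⟩ hmem hmem.1
  simp only [cos_abs, sq_abs, cos_zero, zero_pow two_ne_zero, zero_div, exp_zero, mul_one] at h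
  rw [abs_of_nonneg (cos_nonneg_of_neg_pi_div_two_le_of_le (abs_le.mp hx).1 (abs_le.mp hx).2),
    exp_neg, ← one_div, le_div_iff₀ (exp_pos _)]
  exact h

lemma abs_cos_pi_mul_natCast_sub_div (p j : ℕ) (hj : j ≤ p) :
    |cos (π * (p - j : ℕ) / p)| = |cos (π * j / p)| := by
  rcases Nat.eq_zero_or_pos p with rfl | hp
  · simp
  have hp' : (p : ℝ) ≠ 0 := by positivity
  rw [Nat.cast_sub hj, mul_sub, sub_div, mul_div_cancel_right₀ π hp', cos_pi_sub, abs_neg]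

lemma abs_cos_pi_mul_div_le (p j : ℕ) (hj : j ≤ p) :
    |cos (π * j / p)| ≤ exp (-((π / p) ^ 2 / 2 * (min j (p - j) : ℕ) ^ 2)) := by
  have key (m : ℕ) (hm : 2 * m ≤ p) : |cos (π * m / p)| ≤ exp (-((π / p) ^ 2 / 2 * m ^ 2)) := by
    have hx : |π * m / p| ≤ π / 2 := by
      rcases Nat.eq_zero_or_pos p with rfl | hp
      · simpa using pi_div_two_pos.le
      rw [abs_of_nonneg (by positivity), div_le_div_iff₀ (by positivity) two_pos]
      have : (2 * m : ℝ) ≤ p := by exact_mod_cast hm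
      nlinarith [pi_pos]
    convert abs_cos_le_exp_neg_sq_div_two hx using 3
    ring
  rcases le_total (2 * j) p with h | h
  · rw [min_eq_left (by omega)]
    exact key j h
  · rw [min_eq_right (by omega), ← abs_cos_pi_mul_natCast_sub_div p j hj]
    exact key _ (by omega)

theorem Finset.card_pow_three_le_sum_sq_of_card_filter_le {ι : Type*} (s : Finset ι) (f : ι → ℕ)
    (c : ℕ) (h : ∀ i ∈ s, #{j ∈ s | f j ≤ f i} ≤ c * f i) :
    #s ^ 3 ≤ 3 * c ^ 2 * ∑ i ∈ s, f i ^ 2 := by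
  classical
  suffices ∀ t ⊆ s, #t ^ 3 ≤ 3 * c ^ 2 * ∑ i ∈ t, f i ^ 2 from this s subset_rfl
  intro t
  induction t using Finset.induction_on_max_value f with
  | empty => simp
  | insert a t ha hmax ih =>
    intro hts
    have hcard : #t + 1 ≤ c * f a := calc
      #t + 1 = #(insert a t) := (card_insert_of_notMem ha).symm
      _ ≤ #{j ∈ s | f j ≤ f a} := card_le_card fun j hj => mem_filter.2
        ⟨hts hj, (mem_insert.1 hj).elim (fun h => h ▸ le_rfl) (hmax j)⟩
      _ ≤ c * f a := h a (hts (mem_insert_self a t))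
    rw [card_insert_of_notMem ha, sum_insert ha]
    have := ih ((subset_insert a t).trans hts)
    nlinarith [Nat.mul_le_mul hcard hcard]

lemma card_filter_min_sub_le (p m : ℕ) : #{j ∈ Icc 1 (p - 1) | min j (p - j) ≤ m} ≤ 2 * m := calc
  #{j ∈ Icc 1 (p - 1) | min j (p - j) ≤ m} ≤ #(Icc 1 m ∪ Ico (p - m) p) :=
    card_le_card fun j hj => by
      simp only [mem_filter, mem_Icc] at hj
      simp only [mem_union, mem_Icc, mem_Ico]
      omega
  _ ≤ #(Icc 1 m) + #(Ico (p - m) p) := card_union_le _ _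
  _ ≤ 2 * m := by rw [Nat.card_Icc, Nat.card_Ico]; omega

lemma card_pow_three_le_sum_sq_min_sub {p : ℕ} {J : Finset ℕ} (hJ : J ⊆ Icc 1 (p - 1)) :
    #J ^ 3 ≤ 12 * ∑ j ∈ J, min j (p - j) ^ 2 :=
  card_pow_three_le_sum_sq_of_card_filter_le J _ 2 fun _ _ =>
    (card_le_card (filter_subset_filter _ hJ)).trans (card_filter_min_sub_le p _)

lemma sq_le_exp_pi_sq_mul_div {x : ℝ} (hx : 6000 ≤ x) : x ^ 2 ≤ exp (π ^ 2 * x / 3000) := by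
  have hlog6000 : log 6000 ≤ 9 := by
    rw [log_le_iff_le_exp (by norm_num)]
    calc (6000 : ℝ) ≤ 2.7182818283 ^ 9 := by norm_num
      _ ≤ exp 1 ^ 9 := pow_le_pow_left₀ (by norm_num) exp_one_gt_d9.le 9
      _ = exp 9 := by rw [← exp_nat_mul]; norm_num
  have hlog : log x ≤ log 6000 + (x / 6000 - 1) := by
    rw [← sub_le_iff_le_add', ← log_div (by positivity) (by norm_num)]
    exact log_le_sub_one_of_pos (by positivity)
  have hpi : 9 < π ^ 2 := by nlinarith [pi_gt_three]
  rw [← exp_log (by positivity : 0 < x ^ 2), exp_le_exp, log_pow]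
  push_cast
  nlinarith

theorem cos_product_small_general (p : ℕ) (h : 6000 < p)
    (J : Finset ℕ) (hJ : J ⊆ Finset.Icc 1 (p - 1))
    (hcard : (p + 4) / 5 ≤ J.card) :
    ∏ j ∈ J, |Real.cos (Real.pi * j / p)| ≤ 1 / (p : ℝ) ^ 2 := by
  have hp : (6000 : ℝ) ≤ p := by exact_mod_cast h.le
  set S : ℝ := ∑ j ∈ J, ((min j (p - j) : ℕ) : ℝ) ^ 2
  have hS : (p : ℝ) ^ 3 / 1500 ≤ S := by
    have h5 : (p : ℝ) ≤ 5 * #J := by exact_mod_cast (by omega : p ≤ 5 * #J)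
    have h12 : (#J : ℝ) ^ 3 ≤ 12 * S := by
      simp only [S]; exact_mod_cast card_pow_three_le_sum_sq_min_sub hJ
    nlinarith [pow_le_pow_left₀ (by positivity) h5 3]
  calc ∏ j ∈ J, |cos (π * j / p)|
      ≤ ∏ j ∈ J, exp (-((π / p) ^ 2 / 2 * (min j (p - j) : ℕ) ^ 2)) :=
        prod_le_prod (fun _ _ => abs_nonneg _) fun j hj =>
          abs_cos_pi_mul_div_le p j (by have := mem_Icc.1 (hJ hj); omega)
    _ = exp (-((π / p) ^ 2 / 2 * S)) := by rw [← exp_sum, sum_neg_distrib, mul_sum]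
    _ ≤ exp (-(π ^ 2 * p / 3000)) := by
        refine exp_le_exp.2 (neg_le_neg ?_)
        calc π ^ 2 * p / 3000 = (π / p) ^ 2 / 2 * (p ^ 3 / 1500) := by field_simp; ring
          _ ≤ (π / p) ^ 2 / 2 * S := by gcongr
    _ ≤ 1 / p ^ 2 := by
        rw [exp_neg, one_div]
        exact inv_anti₀ (by positivity) (sq_le_exp_pi_sq_mul_div hp)

theorem cos_product_small (p : ℕ) (hp : p.Prime) (h : 6000 < p)
    (J : Finset ℕ) (hJ : J ⊆ Finset.Icc 1 (p - 1))
    (hcard : (p + 4) / 5 ≤ J.card) :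
    ∏ j ∈ J, |Real.cos (Real.pi * j / p)| ≤ 1 / (p : ℝ) ^ 2 :=
  cos_product_small_general p h J hJ hcard
end

section
/- Let p be a prime, and let S ⊆ Z/pZ be a zero-sum free set of size Ol(Z/pZ) - 1 (which exists by definition of Ol). Then for suitable y₀ ∈ Z/pZ the set A = {(x,0) : x ∈ S} ∪ {(y,1) : y ∈ Z/pZ, y ≠ y₀} is zero-sum free in (Z/pZ)², showing Ol((Z/pZ)²) ≥ p - 1 + Ol(Z/pZ). -/
/-- A finite subset of an abelian group is zero-sum free if no nonempty subset sums to zero. -/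
def IsZeroSumFree {G : Type*} [AddCommGroup G] (A : Finset G) : Prop :=
  ∀ S ⊆ A, S.Nonempty → S.sum id ≠ 0

/-- The Olson constant: the least `k` such that every `k`-element subset contains a
nonempty zero-sum subset. -/
noncomputable def olson (G : Type*) [AddCommGroup G] [Fintype G] : ℕ :=
  sInf {k : ℕ | ∀ A : Finset G, A.card = k → ¬ IsZeroSumFree A}

lemma olson_gt {G : Type*} [AddCommGroup G] [Fintype G] (A : Finset G)
    (h : IsZeroSumFree A) : A.card < olson G := by
  have hne : {k : ℕ | ∀ B : Finset G, B.card = k → ¬ IsZeroSumFree B}.Nonempty := by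
    refine ⟨Fintype.card G + 1, fun B hB _ => ?_⟩
    have := B.card_le_univ
    omega
  have hmem := Nat.sInf_mem hne
  by_contra hlt
  push_neg at hlt
  obtain ⟨B, hBA, hBcard⟩ := Finset.exists_subset_card_eq hlt
  exact hmem B hBcard (fun T hT hTne => h T (hT.trans hBA) hTne)

lemma olson_pos (G : Type*) [AddCommGroup G] [Fintype G] : 1 ≤ olson G := by
  have := olson_gt (∅ : Finset G) (by intro T hT hTne; simp [Finset.subset_empty] at hT; simp [hT] at hTne)
  exact (by simpa using this : 0 < olson G)

theorem olson_lower_construction (p : ℕ) [Fact p.Prime]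
    (S : Finset (ZMod p)) (hS : IsZeroSumFree S)
    (hcard : S.card = olson (ZMod p) - 1) :
    ∃ y₀ : ZMod p,
      IsZeroSumFree ((S.image (fun x => ((x, 0) : ZMod p × ZMod p))) ∪
        ((Finset.univ.erase y₀).image (fun y => ((y, 1) : ZMod p × ZMod p)))) ∧
      p - 1 + olson (ZMod p) ≤ olson (ZMod p × ZMod p) := by
  have hp : 2 ≤ p := (Fact.out : p.Prime).two_le
  haveI : Fact (1 < p) := ⟨hp⟩
  have h10 : (1 : ZMod p) ≠ 0 := one_ne_zero
  set A := ((S.image (fun x => ((x, 0) : ZMod p × ZMod p))) ∪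
        ((Finset.univ.erase (0 : ZMod p)).image (fun y => ((y, 1) : ZMod p × ZMod p)))) with hA
  have hzsf : IsZeroSumFree A := by
    intro T hT hTne hsum
    set T₂ := T.filter (fun z => z.2 = 1) with hT₂
    -- second coordinate sum
    have hsnd : (T.sum id).2 = T.sum (fun z => z.2) := by
      simp [Finset.sum_apply, Prod.snd_sum]
    have hcases : ∀ z ∈ T, z.2 = 0 ∨ z.2 = 1 := by
      intro z hz
      have := hT hz
      rw [hA, Finset.mem_union] at this
      rcases this with h | h
      · obtain ⟨x, _, rfl⟩ := Finset.mem_image.mp h; left; rfl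
      · obtain ⟨y, _, rfl⟩ := Finset.mem_image.mp h; right; rfl
    have hsum2 : T.sum (fun z => z.2) = (T₂.card : ZMod p) := by
      rw [← Finset.sum_filter_add_sum_filter_not T (fun z => z.2 = 1)]
      have h1 : (T.filter (fun z => z.2 = 1)).sum (fun z => z.2) = (T₂.card : ZMod p) := by
        rw [Finset.sum_congr rfl (fun z hz => (Finset.mem_filter.mp hz).2)]
        simp [hT₂]
      have h0 : (T.filter (fun z => ¬ z.2 = 1)).sum (fun z => z.2) = 0 := by
        apply Finset.sum_eq_zero
        intro z hz
        rcases hcases z (Finset.mem_filter.mp hz).1 with h | h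
        · exact h
        · exact absurd h (Finset.mem_filter.mp hz).2
      rw [h1, h0, add_zero]
    have hzero : (T₂.card : ZMod p) = 0 := by
      rw [← hsum2, ← hsnd, hsum]; rfl
    have hdvd : p ∣ T₂.card := (ZMod.natCast_eq_zero_iff _ _).mp hzero
    have hle : T₂.card ≤ p - 1 := by
      have hsub : T₂ ⊆ (Finset.univ.erase (0 : ZMod p)).image
          (fun y => ((y, 1) : ZMod p × ZMod p)) := by
        intro z hz
        have hzT := (Finset.mem_filter.mp hz).1
        have h2 := (Finset.mem_filter.mp hz).2
        have := hT hzT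
        rw [hA, Finset.mem_union] at this
        rcases this with h | h
        · obtain ⟨x, _, rfl⟩ := Finset.mem_image.mp h
          exact absurd h2 (by simpa using h10.symm)
        · exact h
      calc T₂.card ≤ _ := Finset.card_le_card hsub
        _ ≤ (Finset.univ.erase (0 : ZMod p)).card := Finset.card_image_le
        _ = p - 1 := by
          rw [Finset.card_erase_of_mem (Finset.mem_univ _), Finset.card_univ, ZMod.card]
    have hT₂empty : T₂ = ∅ := by
      have : T₂.card = 0 := by
        rcases Nat.eq_zero_of_dvd_of_lt hdvd (by omega) with h
        · exact h
      exact Finset.card_eq_zero.mp this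
    -- so T ⊆ image of S
    have hTsub : T ⊆ S.image (fun x => ((x, 0) : ZMod p × ZMod p)) := by
      intro z hz
      have := hT hz
      rw [hA, Finset.mem_union] at this
      rcases this with h | h
      · exact h
      · exfalso
        obtain ⟨y, _, rfl⟩ := Finset.mem_image.mp h
        have : ((y, 1) : ZMod p × ZMod p) ∈ T₂ := Finset.mem_filter.mpr ⟨hz, rfl⟩
        simp [hT₂empty] at this
    obtain ⟨t, hts, htT⟩ := Finset.subset_image_iff.mp hTsub
    have htne : t.Nonempty := by
      rcases hTne with ⟨z, hz⟩
      rw [← htT] at hz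
      obtain ⟨x, hx, _⟩ := Finset.mem_image.mp hz
      exact ⟨x, hx⟩
    apply hS t hts htne
    have : (T.sum id).1 = t.sum id := by
      rw [← htT, Finset.sum_image (by intro a _ b _ h; simpa using h)]
      simp [Prod.fst_sum]
    rw [hsum] at this
    exact this.symm
  refine ⟨0, hzsf, ?_⟩
  have hlt := olson_gt A hzsf
  have hAcard : A.card = (olson (ZMod p) - 1) + (p - 1) := by
    rw [hA, Finset.card_union_of_disjoint, Finset.card_image_of_injective _
        (by intro a b h; simpa using h), Finset.card_image_of_injective _
        (by intro a b h; simpa using h), hcard,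
      Finset.card_erase_of_mem (Finset.mem_univ _), Finset.card_univ, ZMod.card]
    · rw [Finset.disjoint_left]
      rintro z hz1 hz2
      obtain ⟨x, _, rfl⟩ := Finset.mem_image.mp hz1
      obtain ⟨y, _, h⟩ := Finset.mem_image.mp hz2
      exact h10 (congrArg Prod.snd h)
  have hop := olson_pos (ZMod p)
  omega
end

section
/- Let p be a prime and let A ⊆ {0} × Z/pZ ⊆ (Z/pZ)² with |A| ≥ ⌊√(4p-7)⌋ + 1. Then A contains a nonempty zero-sum subset. -/
open Finset Polynomial

lemma coeff_basis_top {F : Type*} [Field F] [DecidableEq F] (S : Finset F) {i : F}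
    (hi : i ∈ S) :
    (Lagrange.basis S id i).coeff (S.card - 1) = Lagrange.nodalWeight S id i := by
  have h1 : Lagrange.basis S id i
      = C (Lagrange.nodalWeight S id i) * Lagrange.nodal (S.erase i) id := by
    rw [Lagrange.basis_eq_prod_sub_inv_mul_nodal_div hi, Lagrange.nodal_erase_eq_nodal_div hi]
  rw [h1, coeff_C_mul]
  have h2 : (Lagrange.nodal (S.erase i) id).natDegree = S.card - 1 := by
    rw [Lagrange.natDegree_nodal, card_erase_of_mem hi]
  rw [← h2, Monic.coeff_natDegree (Lagrange.nodal_monic), mul_one]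

lemma lagrange_power_sum {F : Type*} [Field F] [DecidableEq F] (S : Finset F) (e : ℕ)
    (he : e < S.card) :
    ∑ s ∈ S, s ^ e * Lagrange.nodalWeight S id s
      = if e = S.card - 1 then 1 else 0 := by
  have hinj : Set.InjOn id (S : Set F) := fun a _ b _ h => h
  have hdeg : (X ^ e : F[X]).degree < S.card := by
    simpa [degree_X_pow] using (Nat.cast_lt (α := WithBot ℕ)).mpr he
  have h := Lagrange.eq_interpolate hinj hdeg
  have := congrArg (fun q : F[X] => q.coeff (S.card - 1)) h
  simp only [Lagrange.interpolate_apply, finset_sum_coeff, coeff_C_mul, coeff_X_pow] at this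
  rw [Finset.sum_congr rfl (fun s hs => by
      rw [coeff_basis_top S hs, eval_pow, eval_X])] at this
  rcases eq_or_ne e (S.card - 1) with h' | h'
  · simpa [h'] using this.symm
  · simpa [h', Ne.symm h'] using this.symm

lemma vandermonde_det_expand {k : ℕ} {R : Type*} [CommRing R] (x : Fin k → R) :
    (Matrix.vandermonde x).det
      = ∑ σ : Equiv.Perm (Fin k), ((Equiv.Perm.sign σ : ℤ) : R) * ∏ i, x i ^ (σ i : ℕ) := by
  rw [← Matrix.det_transpose, Matrix.det_apply']
  rfl


lemma exists_exponents (k c P : ℕ) (hk : 0 < k) (hbig : P ≤ k * c) :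
    ∃ m : Fin k → ℕ, StrictMono m ∧ (∀ i, m i ≤ k - 1 + c) ∧
      ∑ i, m i = P + ∑ i : Fin k, (i : ℕ) := by
  have he_anti : ∀ t t' : ℕ, t ≤ t' → min c (P - t' * c) ≤ min c (P - t * c) := by
    intro t t' h
    have := Nat.mul_le_mul_right c h
    omega
  refine ⟨fun i => (i : ℕ) + min c (P - (k - 1 - (i:ℕ)) * c), ?_, ?_, ?_⟩
  · intro i j hij
    have h1 : (k - 1 - (j:ℕ)) ≤ (k - 1 - (i:ℕ)) := by omega
    have h2 := he_anti _ _ h1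
    have hij' : (i : ℕ) < (j : ℕ) := hij
    simp only
    omega
  · intro i
    have h1 : (i:ℕ) ≤ k - 1 := by omega
    have h2 : min c (P - (k - 1 - (i:ℕ)) * c) ≤ c := min_le_left _ _
    simp only
    omega
  · have key : ∑ t ∈ Finset.range k, min c (P - t * c) = P := by
      have h1 : ∀ t : ℕ, min c (P - t * c) = min ((t+1) * c) P - min (t * c) P := by
        intro t
        have : (t + 1) * c = t * c + c := by ring
        omega
      rw [Finset.sum_congr rfl fun t _ => h1 t]
      rw [Finset.sum_range_tsub (f := fun t => min (t * c) P)
        (fun a b hab => by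
          have := Nat.mul_le_mul_right c hab
          simp only
          omega) k]
      simp only [Nat.zero_mul]
      omega
    have h0 : ∑ i : Fin k, ((i : ℕ) + min c (P - (k - 1 - (i:ℕ)) * c))
        = (∑ i : Fin k, (i:ℕ)) + ∑ i : Fin k, min c (P - (k - 1 - (i:ℕ)) * c) := by
      rw [← Finset.sum_add_distrib]
    have h2 : ∑ i : Fin k, min c (P - (k - 1 - (i:ℕ)) * c)
        = ∑ t ∈ Finset.range k, min c (P - (k - 1 - t) * c) :=
      Fin.sum_univ_eq_sum_range (fun t => min c (P - (k - 1 - t) * c)) k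
    have h3 := Finset.sum_range_reflect (fun t => min c (P - t * c)) k
    rw [h0, h2, h3, key]
    omega

lemma exists_ksubset_sum_zero (p : ℕ) [hp : Fact p.Prime] (B : Finset (ZMod p)) (k : ℕ)
    (hk : 0 < k) (hkB : k ≤ B.card) (hbig : p - 1 ≤ k * (B.card - k)) :
    ∃ T ⊆ B, T.card = k ∧ T.sum id = 0 := by
  classical
  by_contra hcon
  push_neg at hcon
  set n := B.card with hn
  set c := n - k with hc
  set P := p - 1 with hPdef
  have hp2 : 2 ≤ p := hp.out.two_le
  have hP1 : 1 ≤ P := by omega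
  have hnp : n ≤ p := by
    have := Finset.card_le_univ B
    simpa [ZMod.card] using this
  have hkn : 1 ≤ n := le_trans hk hkB
  -- the exponents m
  obtain ⟨m, hm_mono, hm_le', hm_sum⟩ := exists_exponents k c P hk hbig
  have hm_le : ∀ i, m i ≤ n - 1 := fun i => by have := hm_le' i; omega
  -- the subsets
  have hmn : ∀ i : Fin k, m i + 1 ≤ n := fun i => by have := hm_le i; omega
  choose S hSB hScard using fun i : Fin k => Finset.exists_subset_card_eq (hmn i)
  -- weights
  set w : Fin k → ZMod p → ZMod p := fun i s => Lagrange.nodalWeight (S i) id s with hw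
  set T : Fin k → ℕ → ZMod p := fun i e => ∑ s ∈ S i, s ^ e * w i s with hT
  have hT0 : ∀ i e, e < m i → T i e = 0 := by
    intro i e hei
    have h := lagrange_power_sum (S i) e (by rw [hScard]; omega)
    rw [hScard] at h
    simpa [hT, hw, Nat.ne_of_lt hei] using h
  have hT1 : ∀ i, T i (m i) = 1 := by
    intro i
    have h := lagrange_power_sum (S i) (m i) (by rw [hScard]; omega)
    rw [hScard] at h
    simpa [hT, hw] using h
  -- the total sum
  set tot : ZMod p := ∑ x ∈ Fintype.piFinset S,
      ((∑ i, x i) ^ P - 1) * (Matrix.vandermonde x).det * ∏ i, w i (x i) with htot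
  have htot0 : tot = 0 := by
    refine Finset.sum_eq_zero fun x hx => ?_
    rw [Fintype.mem_piFinset] at hx
    by_cases hinj : Function.Injective x
    · have hsum : (∑ i, x i) ≠ 0 := by
        have hsub : Finset.image x Finset.univ ⊆ B := by
          intro b hb; rcases Finset.mem_image.mp hb with ⟨i, _, rfl⟩; exact hSB i (hx i)
        have hcard : (Finset.image x Finset.univ).card = k := by
          rw [Finset.card_image_of_injective _ hinj, Finset.card_univ, Fintype.card_fin]
        have h := hcon _ hsub hcard
        rw [Finset.sum_image (fun a _ b _ h => hinj h)] at h
        simpa using h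
      have h1 : (∑ i, x i) ^ P = 1 := ZMod.pow_card_sub_one_eq_one hsum
      simp [h1]
    · have hdet : (Matrix.vandermonde x).det = 0 := by
        by_contra hdet
        exact hinj (Matrix.det_vandermonde_ne_zero_iff.mp hdet)
      simp [hdet]
  -- N
  set N : Equiv.Perm (Fin k) → ℕ := fun σ =>
    if ∀ i, (σ i : ℕ) ≤ m i then Nat.multinomial Finset.univ (fun i => m i - σ i) else 0
    with hN
  -- grid factorization
  have grid : ∀ (e : Fin k → ℕ),
      ∑ x ∈ Fintype.piFinset S, ∏ i, (x i ^ e i * w i (x i)) = ∏ i, T i (e i) := by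
    intro e
    simp only [hT]
    exact (Finset.prod_univ_sum S fun i s => s ^ e i * w i s).symm
  -- expansion of the integrand
  have expand : ∀ x : Fin k → ZMod p,
      ((∑ i, x i) ^ P - 1) * (Matrix.vandermonde x).det * ∏ i, w i (x i)
      = (∑ d ∈ Finset.piAntidiag Finset.univ P, ∑ σ : Equiv.Perm (Fin k),
          (Nat.multinomial Finset.univ d : ZMod p) * ((Equiv.Perm.sign σ : ℤ) : ZMod p)
            * ∏ i, (x i ^ (d i + (σ i : ℕ)) * w i (x i)))
        - ∑ σ : Equiv.Perm (Fin k), ((Equiv.Perm.sign σ : ℤ) : ZMod p)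
            * ∏ i, (x i ^ (σ i : ℕ) * w i (x i)) := by
    intro x
    rw [sub_mul, sub_mul, one_mul]
    congr 1
    · rw [Finset.sum_pow_eq_sum_piAntidiag, vandermonde_det_expand,
        Finset.sum_mul_sum, Finset.sum_mul]
      refine Finset.sum_congr rfl fun d _ => ?_
      rw [Finset.sum_mul]
      refine Finset.sum_congr rfl fun σ _ => ?_
      simp_rw [pow_add]
      rw [Finset.prod_mul_distrib, Finset.prod_mul_distrib]
      ring
    · rw [vandermonde_det_expand, Finset.sum_mul]
      refine Finset.sum_congr rfl fun σ _ => ?_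
      rw [Finset.prod_mul_distrib]
      ring
  have htot1 : tot = ∑ σ : Equiv.Perm (Fin k), ((Equiv.Perm.sign σ : ℤ) : ZMod p) * N σ := by
    rw [htot, Finset.sum_congr rfl fun x _ => expand x, Finset.sum_sub_distrib]
    have hA : ∑ x ∈ Fintype.piFinset S, ∑ d ∈ Finset.piAntidiag Finset.univ P,
        ∑ σ : Equiv.Perm (Fin k),
          (Nat.multinomial Finset.univ d : ZMod p) * ((Equiv.Perm.sign σ : ℤ) : ZMod p)
            * ∏ i, (x i ^ (d i + (σ i : ℕ)) * w i (x i))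
        = ∑ σ : Equiv.Perm (Fin k), ∑ d ∈ Finset.piAntidiag Finset.univ P,
          (Nat.multinomial Finset.univ d : ZMod p) * ((Equiv.Perm.sign σ : ℤ) : ZMod p)
            * ∏ i, T i (d i + (σ i : ℕ)) := by
      have h1 : ∀ d : Fin k → ℕ, ∑ x ∈ Fintype.piFinset S, ∑ σ : Equiv.Perm (Fin k),
          (Nat.multinomial Finset.univ d : ZMod p) * ((Equiv.Perm.sign σ : ℤ) : ZMod p)
            * ∏ i, (x i ^ (d i + (σ i : ℕ)) * w i (x i))
          = ∑ σ : Equiv.Perm (Fin k),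
          (Nat.multinomial Finset.univ d : ZMod p) * ((Equiv.Perm.sign σ : ℤ) : ZMod p)
            * ∏ i, T i (d i + (σ i : ℕ)) := by
        intro d
        rw [Finset.sum_comm (s := Fintype.piFinset S)
          (t := (Finset.univ : Finset (Equiv.Perm (Fin k))))
          (f := fun x σ => (Nat.multinomial Finset.univ d : ZMod p)
            * ((Equiv.Perm.sign σ : ℤ) : ZMod p)
            * ∏ i, (x i ^ (d i + (σ i : ℕ)) * w i (x i)))]
        refine Finset.sum_congr rfl fun σ _ => ?_
        rw [← Finset.mul_sum, grid]
      rw [Finset.sum_comm (s := Fintype.piFinset S) (t := Finset.piAntidiag Finset.univ P)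
        (f := fun x d => ∑ σ : Equiv.Perm (Fin k),
          (Nat.multinomial Finset.univ d : ZMod p) * ((Equiv.Perm.sign σ : ℤ) : ZMod p)
            * ∏ i, (x i ^ (d i + (σ i : ℕ)) * w i (x i))),
        Finset.sum_congr rfl fun d _ => h1 d]
      exact Finset.sum_comm (s := Finset.piAntidiag Finset.univ P)
        (t := (Finset.univ : Finset (Equiv.Perm (Fin k))))
    have hB : ∑ x ∈ Fintype.piFinset S, ∑ σ : Equiv.Perm (Fin k),
          ((Equiv.Perm.sign σ : ℤ) : ZMod p) * ∏ i, (x i ^ (σ i : ℕ) * w i (x i))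
        = ∑ σ : Equiv.Perm (Fin k),
          ((Equiv.Perm.sign σ : ℤ) : ZMod p) * ∏ i, T i ((σ i : ℕ)) := by
      rw [Finset.sum_comm (s := Fintype.piFinset S) (t := (Finset.univ : Finset (Equiv.Perm (Fin k))))
        (f := fun x σ => ((Equiv.Perm.sign σ : ℤ) : ZMod p)
            * ∏ i, (x i ^ ((σ i : ℕ)) * w i (x i)))]
      refine Finset.sum_congr rfl fun σ _ => ?_
      rw [← Finset.mul_sum, grid]
    rw [hA, hB]
    have hB0 : ∑ σ : Equiv.Perm (Fin k),
        ((Equiv.Perm.sign σ : ℤ) : ZMod p) * ∏ i, T i ((σ i : ℕ)) = 0 := by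
      refine Finset.sum_eq_zero fun σ _ => ?_
      have hex : ∃ i, (σ i : ℕ) < m i := by
        by_contra hno
        push_neg at hno
        have h1 : ∑ i, m i ≤ ∑ i : Fin k, (σ i : ℕ) :=
          Finset.sum_le_sum fun i _ => hno i
        rw [Equiv.sum_comp σ (fun i : Fin k => (i : ℕ))] at h1
        omega
      obtain ⟨i, hi⟩ := hex
      rw [Finset.prod_eq_zero (Finset.mem_univ i) (hT0 i _ hi), mul_zero]
    rw [hB0, sub_zero]
    refine Finset.sum_congr rfl fun σ _ => ?_
    by_cases hv : ∀ i, (σ i : ℕ) ≤ m i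
    · set d₀ : Fin k → ℕ := fun i => m i - σ i with hd₀
      have hd₀sum : ∑ i, d₀ i = P := by
        rw [hd₀, Finset.sum_tsub_distrib Finset.univ fun i _ => hv i,
          Equiv.sum_comp σ (fun i : Fin k => (i : ℕ))]
        omega
      have hd₀mem : d₀ ∈ Finset.piAntidiag Finset.univ P := by
        rw [Finset.mem_piAntidiag]
        exact ⟨hd₀sum, fun i _ => Finset.mem_univ i⟩
      rw [Finset.sum_eq_single_of_mem d₀ hd₀mem ?side]
      case side =>
        intro d hd hne
        have hsum_d : ∑ i, d i = P := ((Finset.mem_piAntidiag).mp hd).1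
        have hex : ∃ i, d i + (σ i:ℕ) < m i := by
          by_contra hno
          push_neg at hno
          have hne' : ∃ j, d j + (σ j:ℕ) ≠ m j := by
            by_contra hall
            push_neg at hall
            apply hne
            funext i
            have h1 := hall i
            have h2 := hv i
            simp only [hd₀]
            omega
          obtain ⟨j, hj⟩ := hne'
          have hlt : ∑ i, m i < ∑ i, (d i + (σ i:ℕ)) :=
            Finset.sum_lt_sum (fun i _ => hno i)
              ⟨j, Finset.mem_univ j, lt_of_le_of_ne (hno j) (Ne.symm hj)⟩
          rw [Finset.sum_add_distrib, hsum_d,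
            Equiv.sum_comp σ (fun i : Fin k => (i : ℕ))] at hlt
          omega
        obtain ⟨i, hi⟩ := hex
        rw [Finset.prod_eq_zero (Finset.mem_univ i) (hT0 i _ hi), mul_zero]
      · have hone : ∀ i, d₀ i + (σ i : ℕ) = m i := fun i => by
          simp only [hd₀]; have := hv i; omega
        rw [Finset.prod_congr rfl fun i _ => by rw [hone i, hT1 i], Finset.prod_const_one,
          mul_one]
        simp only [hN, if_pos hv, hd₀]
        ring
    · simp only [hN, if_neg hv, Nat.cast_zero, mul_zero]
      refine Finset.sum_eq_zero fun d hd => ?_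
      have hsum_d : ∑ i, d i = P := ((Finset.mem_piAntidiag).mp hd).1
      push_neg at hv
      obtain ⟨i₀, hi₀⟩ := hv
      have hex : ∃ i, d i + (σ i:ℕ) < m i := by
        by_contra hno
        push_neg at hno
        have hlt : ∑ i, m i < ∑ i, (d i + (σ i:ℕ)) :=
          Finset.sum_lt_sum (fun i _ => hno i)
            ⟨i₀, Finset.mem_univ i₀, by omega⟩
        rw [Finset.sum_add_distrib, hsum_d,
          Equiv.sum_comp σ (fun i : Fin k => (i : ℕ))] at hlt
        omega
      obtain ⟨i, hi⟩ := hex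
      rw [Finset.prod_eq_zero (Finset.mem_univ i) (hT0 i _ hi), mul_zero]
  -- the integer identity
  set Z : ℤ := ∑ σ : Equiv.Perm (Fin k), (Equiv.Perm.sign σ : ℤ) * N σ with hZ
  have hcast : tot = (Z : ZMod p) := by
    rw [htot1, hZ]
    push_cast
    rfl
  have per : ∀ σ : Equiv.Perm (Fin k),
      (∏ i, (m i).factorial) * N σ = P.factorial * ∏ i, (m i).descFactorial (σ i : ℕ) := by
    intro σ
    by_cases hv : ∀ i, (σ i : ℕ) ≤ m i
    · simp only [hN, if_pos hv]
      have h1 : ∀ i, (m i).factorial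
          = (m i).descFactorial (σ i : ℕ) * (m i - (σ i : ℕ)).factorial := fun i => by
        rw [mul_comm, Nat.factorial_mul_descFactorial (hv i)]
      rw [Finset.prod_congr rfl fun i _ => h1 i, Finset.prod_mul_distrib, mul_assoc,
        Nat.multinomial_spec]
      have hsum : ∑ i, (m i - (σ i:ℕ)) = P := by
        rw [Finset.sum_tsub_distrib Finset.univ fun i _ => hv i,
          Equiv.sum_comp σ (fun i : Fin k => (i : ℕ))]
        omega
      rw [hsum, mul_comm]
    · push_neg at hv
      obtain ⟨i₀, hi₀⟩ := hv
      have h2 : (m i₀).descFactorial (σ i₀ : ℕ) = 0 :=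
        Nat.descFactorial_eq_zero_iff_lt.mpr hi₀
      simp only [hN, if_neg (show ¬ ∀ i : Fin k, (σ i : ℕ) ≤ m i by push_neg; exact ⟨i₀, hi₀⟩)]
      rw [Finset.prod_eq_zero (f := fun i => (m i).descFactorial (σ i : ℕ))
        (Finset.mem_univ i₀) h2]
      simp
  have hZid : (∏ i, ((m i).factorial : ℤ)) * Z
      = (P.factorial : ℤ) * ∏ i : Fin k, ∏ j ∈ Finset.Ioi i, ((m j : ℤ) - (m i : ℤ)) := by
    have step1 : (∏ i, ((m i).factorial : ℤ)) * Z
        = ∑ σ : Equiv.Perm (Fin k), (Equiv.Perm.sign σ : ℤ)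
            * ((P.factorial * ∏ i, (m i).descFactorial (σ i : ℕ) : ℕ) : ℤ) := by
      rw [hZ, Finset.mul_sum]
      refine Finset.sum_congr rfl fun σ _ => ?_
      rw [← per σ]
      push_cast
      ring
    rw [step1]
    have step2 : ∑ σ : Equiv.Perm (Fin k), (Equiv.Perm.sign σ : ℤ)
            * ((P.factorial * ∏ i, (m i).descFactorial (σ i : ℕ) : ℕ) : ℤ)
        = (P.factorial : ℤ) * ∑ σ : Equiv.Perm (Fin k), (Equiv.Perm.sign σ : ℤ)
            * ∏ i, ((m i).descFactorial (σ i : ℕ) : ℤ) := by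
      rw [Finset.mul_sum]
      refine Finset.sum_congr rfl fun σ _ => ?_
      push_cast
      ring
    rw [step2]
    -- now the determinant
    have step3 : ∑ σ : Equiv.Perm (Fin k), (Equiv.Perm.sign σ : ℤ)
            * ∏ i, ((m i).descFactorial (σ i : ℕ) : ℤ)
        = (Matrix.of fun i j : Fin k =>
            ((descPochhammer ℤ (j : ℕ)).eval ((m i : ℤ)))).det := by
      rw [Matrix.det_apply']
      simp only [Int.cast_id]
      rw [← Equiv.sum_comp (Equiv.inv (Equiv.Perm (Fin k)))
        (fun σ : Equiv.Perm (Fin k) => (Equiv.Perm.sign σ : ℤ) * ∏ i, Matrix.of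
          (fun i j : Fin k => ((descPochhammer ℤ (j : ℕ)).eval ((m i : ℤ)))) (σ i) i)]
      refine Finset.sum_congr rfl fun σ _ => ?_
      simp only [Equiv.inv_apply, Matrix.of_apply]
      have hsg : ((Equiv.Perm.sign σ⁻¹ : ℤ)) = ((Equiv.Perm.sign σ : ℤ)) := by
        simp
      rw [hsg]
      congr 1
      rw [← Equiv.prod_comp σ
        (fun i : Fin k => (descPochhammer ℤ ((i : ℕ))).eval ((m (σ⁻¹ i) : ℤ)))]
      refine Finset.prod_congr rfl fun i _ => ?_
      rw [show σ⁻¹ (σ i) = i from σ.symm_apply_apply i, descPochhammer_eval_eq_descFactorial]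
    rw [step3, ← Matrix.det_eval_matrixOfPolynomials_eq_det_vandermonde
      (fun i => ((m i : ℤ))) (fun j => descPochhammer ℤ (j : ℕ))
      (fun j => descPochhammer_natDegree _ _) (fun j => monic_descPochhammer _ _),
      Matrix.det_vandermonde]
  -- conclude
  have hZzero : (Z : ZMod p) = 0 := by rw [← hcast, htot0]
  have hfin : (((P.factorial : ℤ) * ∏ i : Fin k, ∏ j ∈ Finset.Ioi i,
      ((m j : ℤ) - (m i : ℤ)) : ℤ) : ZMod p) = 0 := by
    rw [← hZid]
    push_cast
    rw [hZzero, mul_zero]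
  push_cast at hfin
  rcases mul_eq_zero.mp hfin with h | h
  · rw [ZMod.natCast_eq_zero_iff] at h
    have := (Nat.Prime.dvd_factorial hp.out).mp h
    omega
  · rw [Finset.prod_eq_zero_iff] at h
    obtain ⟨i, _, h⟩ := h
    rw [Finset.prod_eq_zero_iff] at h
    obtain ⟨j, hj, h⟩ := h
    rw [sub_eq_zero] at h
    have hji : i < j := Finset.mem_Ioi.mp hj
    have hlt := hm_mono hji
    have hmj : m j ≤ n - 1 := hm_le j
    have hmi : m i ≤ n - 1 := hm_le i
    have hmm := (ZMod.natCast_eq_natCast_iff _ _ _).mp h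
    have hmm' : m j % p = m i % p := hmm
    rw [Nat.mod_eq_of_lt (by omega), Nat.mod_eq_of_lt (by omega)] at hmm'
    omega

lemma sqrt_bound (p : ℕ) (hp : p.Prime) :
    4 * p - 4 ≤ (Nat.sqrt (4 * p - 7) + 1) * (Nat.sqrt (4 * p - 7) + 1) := by
  set m := Nat.sqrt (4 * p - 7) with hm
  have h1 : m * m ≤ 4 * p - 7 := Nat.sqrt_le (4 * p - 7)
  have h2 : 4 * p - 7 < (m + 1) * (m + 1) := Nat.lt_succ_sqrt (4 * p - 7)
  have hp2 := hp.two_le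
  rcases hp.eq_two_or_odd with h | h
  · subst h; norm_num [hm]
  · have hp3 : 3 ≤ p := by omega
    rcases Nat.even_or_odd m with ⟨a, ha⟩ | ⟨a, ha⟩
    · rw [ha] at h1 h2 ⊢
      have e1 : (a + a) * (a + a) = 4 * (a * a) := by ring
      have e2 : (a + a + 1) * (a + a + 1) = 4 * (a * a) + 4 * a + 1 := by ring
      rw [e1] at h1
      rw [e2] at h2 ⊢
      generalize a * a = t at h1 h2 ⊢
      omega
    · rw [ha] at h1 h2 ⊢
      have e1 : (2 * a + 1) * (2 * a + 1) = 4 * (a * a) + 4 * a + 1 := by ring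
      have e2 : (2 * a + 1 + 1) * (2 * a + 1 + 1) = 4 * (a * a) + 8 * a + 4 := by ring
      rw [e1] at h1
      rw [e2] at h2 ⊢
      generalize a * a = t at h1 h2 ⊢
      omega

theorem zero_sum_in_coset (p : ℕ) [Fact p.Prime]
    (A : Finset (ZMod p × ZMod p)) (hsub : ∀ a ∈ A, a.1 = 0)
    (hcard : Nat.sqrt (4 * p - 7) + 1 ≤ A.card) :
    ∃ S ⊆ A, S.Nonempty ∧ S.sum id = 0 := by
  classical
  have hp : p.Prime := Fact.out
  have hp2 := hp.two_le
  set B := A.image Prod.snd with hB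
  have hinj : Set.InjOn Prod.snd (A : Set (ZMod p × ZMod p)) := by
    intro a ha b hb h
    have h1 := hsub a (by simpa using ha)
    have h2 := hsub b (by simpa using hb)
    exact Prod.ext (h1.trans h2.symm) h
  have hcardB : B.card = A.card := Finset.card_image_of_injOn hinj
  set n := B.card with hn
  set k := n / 2 with hk
  have hsq1 : 1 ≤ Nat.sqrt (4 * p - 7) := by
    have h1 : 1 ≤ 4 * p - 7 := by omega
    calc 1 = Nat.sqrt 1 := by simp
    _ ≤ _ := Nat.sqrt_le_sqrt h1
  have hnB : Nat.sqrt (4 * p - 7) + 1 ≤ n := by omega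
  have hn2 : 2 ≤ n := by omega
  have hk1 : 0 < k := by omega
  have hbig : p - 1 ≤ k * (n - k) := by
    have hb := sqrt_bound p hp
    set q := Nat.sqrt (4 * p - 7) with hq
    have hnn : (q + 1) * (q + 1) ≤ n * n :=
      Nat.mul_le_mul hnB hnB
    have h2 : n = 2 * k ∨ n = 2 * k + 1 := by omega
    rcases h2 with h2 | h2
    · have hnk : n - k = k := by omega
      rw [hnk]
      have e1 : (2 * k) * (2 * k) = 4 * (k * k) := by ring
      have : 4 * p - 4 ≤ 4 * (k * k) := by
        calc 4 * p - 4 ≤ (q+1)*(q+1) := hb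
        _ ≤ n * n := hnn
        _ = 4 * (k * k) := by rw [h2, e1]
      generalize k * k = t at this ⊢
      omega
    · have hnk : n - k = k + 1 := by omega
      rw [hnk]
      have e1 : (2 * k + 1) * (2 * k + 1) = 4 * (k * (k + 1)) + 1 := by ring
      have : 4 * p - 4 ≤ 4 * (k * (k + 1)) + 1 := by
        calc 4 * p - 4 ≤ (q+1)*(q+1) := hb
        _ ≤ n * n := hnn
        _ = 4 * (k * (k + 1)) + 1 := by rw [h2, e1]
      generalize k * (k + 1) = t at this ⊢
      omega
  obtain ⟨T, hTB, hTcard, hTsum⟩ :=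
    exists_ksubset_sum_zero p B k hk1 (by omega) hbig
  refine ⟨T.image (fun b => ((0 : ZMod p), b)), ?_, ?_, ?_⟩
  · intro a ha
    rcases Finset.mem_image.mp ha with ⟨b, hb, rfl⟩
    have hbB := hTB hb
    rcases Finset.mem_image.mp (hB ▸ hbB) with ⟨a', ha', hae⟩
    have h0 := hsub a' ha'
    have : ((0 : ZMod p), b) = a' := by
      rw [← hae]; exact Prod.ext h0.symm rfl
    rwa [this]
  · refine Finset.image_nonempty.mpr (Finset.card_pos.mp ?_)
    rw [hTcard]; exact hk1
  · rw [Finset.sum_image (fun a _ b _ h => by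
      simpa using congrArg Prod.snd h)]
    have : ∑ b ∈ T, id ((0 : ZMod p), b) = ((0 : ZMod p), ∑ b ∈ T, b) := by
      rw [Prod.ext_iff]
      constructor
      · rw [Prod.fst_sum]; simp
      · rw [Prod.snd_sum]
        simp
    rw [this]
    have hsum : ∑ b ∈ T, b = 0 := by simpa [id] using hTsum
    rw [hsum]
    rfl
end

section
/- Let p ≥ 29 be prime and let B be a finite multiset of elements of Z/pZ of size at least p - √p in which no element occurs with multiplicity ≥ 2p/5. Then B contains a family of at least p/5 - √p pairwise disjoint sub-multisets, each consisting of two distinct elements that are not additive inverses of each other. -/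
/-!
Call `{x, -x}` the class of `x`; two elements form an admissible pair exactly when their classes
differ. Greedily pairing an element of the largest class with one of the second largest class
preserves the invariant "every class has at most `|C| - m` elements and `2m ≤ |C|`", where `m`
is the number of pairs still to be found. In `B` every class has fewer than `4p/5` elements, so the
invariant holds initially for `m = ⌈p/5 - √p⌉`.
-/

namespace Multiset

variable {α β : Type*}

theorem count_add_count_add_count_le_card [DecidableEq α] {a b c : α} (hab : a ≠ b) (hac : a ≠ c)
    (hbc : b ≠ c) (m : Multiset α) : m.count a + m.count b + m.count c ≤ card m := by
  have hsub : ({a, b, c} : Finset α) ⊆ {a, b, c} ∪ m.toFinset := Finset.subset_union_left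
  have := (Finset.sum_le_sum_of_subset (f := (m.count ·)) hsub).trans_eq
    (sum_count_eq_card fun x hx => Finset.mem_union_right _ (mem_toFinset.2 hx))
  rwa [Finset.sum_insert (by simp [hab, hac]), Finset.sum_pair hbc, ← add_assoc] at this

variable [DecidableEq β] (κ : α → β)

theorem count_map_add_card_filter_ne (C : Multiset α) (a : α) :
    (C.map κ).count (κ a) + card (C.filter fun x => κ x ≠ κ a) = card C := by
  rw [count_map, ← card_add]
  conv_rhs => rw [← filter_add_not (fun x => κ a = κ x) C]
  simp only [ne_comm]

theorem exists_eq_cons_cons_of_count_map_lt {C : Multiset α} (hC : C ≠ 0)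
    (hcount : ∀ x, (C.map κ).count (κ x) < card C) :
    ∃ a b C', κ a ≠ κ b ∧ C = a ::ₘ b ::ₘ C' ∧
      (∀ y ∈ C, (C.map κ).count (κ y) ≤ (C.map κ).count (κ a)) ∧
      ∀ y ∈ C, κ y ≠ κ a → (C.map κ).count (κ y) ≤ (C.map κ).count (κ b) := by
  classical
  obtain ⟨a, haC, ha⟩ := C.toFinset.exists_max_image (fun x => (C.map κ).count (κ x))
    (toFinset_nonempty.2 hC)
  have hD : (C.filter fun x => κ x ≠ κ a) ≠ 0 := by
    have := count_map_add_card_filter_ne κ C a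
    have := hcount a
    intro h
    simp only [h, card_zero] at *
    omega
  obtain ⟨b, hbD, hb⟩ := (C.filter fun x => κ x ≠ κ a).toFinset.exists_max_image
    (fun x => (C.map κ).count (κ x)) (toFinset_nonempty.2 hD)
  rw [mem_toFinset] at haC
  obtain ⟨hbC, hba⟩ := mem_filter.1 (mem_toFinset.1 hbD)
  refine ⟨a, b, (C.erase a).erase b, Ne.symm hba, ?_, fun y hy => ha y (mem_toFinset.2 hy),
    fun y hy hya => hb y (mem_toFinset.2 (mem_filter.2 ⟨hy, hya⟩))⟩
  rw [cons_erase ((mem_erase_of_ne (ne_of_apply_ne κ hba)).2 hbC), cons_erase haC]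

/-- The invariant survives because any third colour is at most as frequent as both removed ones,
hence fills at most a third of `C`. -/
theorem count_map_add_le_of_eq_cons_cons {m : ℕ} {a b : α} {C C' : Multiset α} (hab : κ a ≠ κ b)
    (hC : C = a ::ₘ b ::ₘ C')
    (ha : ∀ y ∈ C, (C.map κ).count (κ y) ≤ (C.map κ).count (κ a))
    (hb : ∀ y ∈ C, κ y ≠ κ a → (C.map κ).count (κ y) ≤ (C.map κ).count (κ b))
    (hcard : 2 * (m + 1) ≤ card C) (hcount : ∀ x, (C.map κ).count (κ x) + (m + 1) ≤ card C)
    (x : α) : (C'.map κ).count (κ x) + m ≤ card C' := by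
  have hcardC : card C = card C' + 2 := by simp [hC]
  have hcountC (z : α) : (C.map κ).count (κ z) =
      (C'.map κ).count (κ z) + (if κ z = κ b then 1 else 0) + (if κ z = κ a then 1 else 0) := by
    simp only [hC, map_cons, count_cons]
  have hx := hcount x
  rw [hcountC] at hx
  split_ifs at hx with hxb hxa hxa
  · exact absurd (hxa.symm.trans hxb) hab
  all_goals try omega
  rcases Nat.eq_zero_or_pos ((C'.map κ).count (κ x)) with h0 | hpos
  · omega
  obtain ⟨y, hyC', hyx⟩ := mem_map.1 (count_pos.1 hpos)
  have hyC : y ∈ C := hC ▸ mem_cons_of_mem (mem_cons_of_mem hyC')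
  have hxb' := hyx ▸ hb y hyC (hyx ▸ hxa)
  have hba' := ha b (hC ▸ mem_cons_of_mem (mem_cons_self b C'))
  have h3 := count_add_count_add_count_le_card hab (Ne.symm hxa) (Ne.symm hxb) (C.map κ)
  rw [card_map, hcountC x, if_neg hxb, if_neg hxa] at h3
  rw [hcountC x, if_neg hxb, if_neg hxa] at hxb'
  omega

theorem exists_pairs_of_count_map_add_le : ∀ (m : ℕ) {C : Multiset α}, 2 * m ≤ card C →
    (∀ x, (C.map κ).count (κ x) + m ≤ card C) →
    ∃ f g : Fin m → α, (∀ i, κ (f i) ≠ κ (g i)) ∧ ∑ i, ({f i, g i} : Multiset α) ≤ C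
  | 0, _, _, _ => ⟨Fin.elim0, Fin.elim0, fun i => i.elim0, by simp⟩
  | m + 1, C, hcard, hcount => by
    obtain ⟨a, b, C', hab, hC, ha, hb⟩ :=
      exists_eq_cons_cons_of_count_map_lt κ (C := C) (card_pos.1 (by omega)) fun x => by
        have := hcount x; omega
    have hcard' : 2 * m ≤ card C' := by rw [hC, card_cons, card_cons] at hcard; omega
    obtain ⟨f, g, hfg, hle⟩ := exists_pairs_of_count_map_add_le m hcard'
      (count_map_add_le_of_eq_cons_cons κ hab hC ha hb hcard hcount)
    subst hC
    refine ⟨Fin.cons a f, Fin.cons b g, Fin.cases hab hfg, ?_⟩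
    simpa [Fin.sum_univ_succ, insert_eq_cons] using cons_le_cons a (cons_le_cons b hle)

end Multiset

section

variable {G : Type*} [AddGroup G] [DecidableEq G]

theorem ne_and_add_ne_zero_of_pair_neg_ne {a b : G} (h : ({a, -a} : Finset G) ≠ {b, -b}) :
    a ≠ b ∧ a + b ≠ 0 := by
  refine ⟨fun hab => h (hab ▸ rfl), fun hab => h ?_⟩
  rw [eq_neg_of_add_eq_zero_left hab, neg_neg, Finset.pair_comm]

theorem count_map_pair_neg_le (B : Multiset G) (v : G) :
    (B.map fun x => ({x, -x} : Finset G)).count {v, -v} ≤ B.count v + B.count (-v) := by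
  rw [Multiset.count_map, Multiset.count_eq_card_filter_eq, Multiset.count_eq_card_filter_eq,
    ← Multiset.card_add, Multiset.filter_add_filter, Multiset.card_add]
  refine le_add_right (Multiset.card_le_card (Multiset.monotone_filter_right _ fun x hx => ?_))
  have : x ∈ ({v, -v} : Finset G) := hx ▸ Finset.mem_insert_self x _
  simp only [Finset.mem_insert, Finset.mem_singleton] at this
  rcases this with rfl | rfl <;> simp

end

theorem extract_disjoint_pairs_general (p : ℕ) (h29 : 29 ≤ p)
    (B : Multiset (ZMod p))
    (hcard : (p : ℝ) - Real.sqrt p ≤ (Multiset.card B : ℝ))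
    (hmult : ∀ x : ZMod p, (B.count x : ℝ) < 2 * p / 5) :
    ∃ (m : ℕ) (f g : Fin m → ZMod p),
      (p : ℝ) / 5 - Real.sqrt p ≤ (m : ℝ) ∧
      (∀ i, f i ≠ g i ∧ f i + g i ≠ 0) ∧
      (∑ i, ({f i, g i} : Multiset (ZMod p))) ≤ B := by
  set m := ⌈(p : ℝ) / 5 - Real.sqrt p⌉₊
  set κ : ZMod p → Finset (ZMod p) := fun x => {x, -x}
  have hclass (v : ZMod p) : (B.map κ).count (κ v) + m ≤ Multiset.card B := by
    have hle : (B.map κ).count (κ v) ≤ Multiset.card B :=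
      Multiset.card_map κ B ▸ (B.map κ).count_le_card (κ v)
    have hsum : ((B.map κ).count (κ v) : ℝ) ≤ B.count v + B.count (-v) := by
      exact_mod_cast count_map_pair_neg_le B v
    have : m ≤ Multiset.card B - (B.map κ).count (κ v) := by
      rw [Nat.ceil_le, Nat.cast_sub hle]
      linarith [hmult v, hmult (-v)]
    omega
  have htwo : 2 * m ≤ Multiset.card B := by
    have hhalf : (Multiset.card B : ℝ) ≤ 2 * (Multiset.card B / 2 : ℕ) + 1 := by
      exact_mod_cast (by omega : Multiset.card B ≤ 2 * (Multiset.card B / 2) + 1)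
    have : m ≤ Multiset.card B / 2 := by
      have : (29 : ℝ) ≤ p := by exact_mod_cast h29
      rw [Nat.ceil_le]
      linarith [Real.sqrt_nonneg p]
    omega
  obtain ⟨f, g, hfg, hle⟩ := Multiset.exists_pairs_of_count_map_add_le κ m htwo hclass
  exact ⟨m, f, g, Nat.le_ceil _, fun i => ne_and_add_ne_zero_of_pair_neg_ne (hfg i), hle⟩

theorem extract_disjoint_pairs (p : ℕ) (hp : p.Prime) (h29 : 29 ≤ p)
    (B : Multiset (ZMod p))
    (hcard : (p : ℝ) - Real.sqrt p ≤ (Multiset.card B : ℝ))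
    (hmult : ∀ x : ZMod p, (B.count x : ℝ) < 2 * p / 5) :
    ∃ (m : ℕ) (f g : Fin m → ZMod p),
      (p : ℝ) / 5 - Real.sqrt p ≤ (m : ℝ) ∧
      (∀ i, f i ≠ g i ∧ f i + g i ≠ 0) ∧
      (∑ i, ({f i, g i} : Multiset (ZMod p))) ≤ B :=
  extract_disjoint_pairs_general p h29 B hcard hmult
end

section
/- Let p be prime and let a₁,...,a_n be distinct nonzero elements of Z/pZ written as pairs {bᵢ, cᵢ} with bᵢ ≠ cᵢ and bᵢ + cᵢ ≠ 0, for i = 1,...,m, together with further elements d₁,...,d_{n-2m}. Then the set of subset sums Σ of the whole collection satisfies |Σ| ≥ min(p, 3m + (n - 2m) + 1) = min(p, n + m + 1). -/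
/-!
Subset sums turn disjoint unions into sumsets, `Σ(A ∪ B) = Σ(A) + Σ(B)`, so by Cauchy–Davenport
adjoining a block `B` to `A` raises `|Σ|` by at least `|Σ(B)| - 1`, up to the cap `p`. A nonzero
element `a` has `Σ{a} = {0, a}` and raises it by `1`; a pair `{b, c}` with `b + c ≠ 0` has the four
distinct sums `0, b, c, b + c` and raises it by `3`, one more than its two elements separately.
-/

/-- The set of all (possibly empty) subset sums of `A`. -/
def sigma0 {p : ℕ} (A : Finset (ZMod p)) : Finset (ZMod p) :=
  A.powerset.image (fun S => S.sum id)

open Finset Function Pointwise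

variable {p : ℕ}

lemma sigma0_union {A B : Finset (ZMod p)} (hAB : Disjoint A B) :
    sigma0 (A ∪ B) = sigma0 A + sigma0 B := by
  ext x
  simp only [sigma0, mem_image, mem_powerset, mem_add]
  constructor
  · rintro ⟨S, hS, rfl⟩
    refine ⟨(S ∩ A).sum id, ⟨S ∩ A, inter_subset_right, rfl⟩,
      (S ∩ B).sum id, ⟨S ∩ B, inter_subset_right, rfl⟩, ?_⟩
    rw [← sum_union (hAB.mono inter_subset_right inter_subset_right),
      ← inter_union_distrib_left, inter_eq_left.2 hS]
  · rintro ⟨_, ⟨S, hS, rfl⟩, _, ⟨T, hT, rfl⟩, rfl⟩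
    exact ⟨S ∪ T, union_subset_union hS hT, sum_union (hAB.mono hS hT)⟩

lemma zero_mem_sigma0 (A : Finset (ZMod p)) : 0 ∈ sigma0 A :=
  mem_image.2 ⟨∅, empty_mem_powerset A, sum_empty⟩

lemma sigma0_nonempty (A : Finset (ZMod p)) : (sigma0 A).Nonempty :=
  ⟨0, zero_mem_sigma0 A⟩

lemma sigma0_singleton (a : ZMod p) : sigma0 {a} = {0, a} := by
  ext x
  simp only [sigma0, mem_image, mem_powerset, subset_singleton_iff, mem_insert, mem_singleton]
  constructor
  · rintro ⟨S, rfl | rfl, rfl⟩ <;> simp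
  · rintro (rfl | rfl)
    exacts [⟨∅, Or.inl rfl, sum_empty⟩, ⟨_, Or.inr rfl, sum_singleton id _⟩]

lemma card_sigma0_singleton {a : ZMod p} (ha : a ≠ 0) : (sigma0 {a}).card = 2 := by
  rw [sigma0_singleton, card_pair ha.symm]

lemma sigma0_pair {a b : ZMod p} (hab : a ≠ b) : sigma0 {a, b} = {0, a, b, a + b} := by
  rw [insert_eq, sigma0_union (disjoint_singleton.2 hab), sigma0_singleton, sigma0_singleton]
  ext x
  simp only [mem_add, mem_insert, mem_singleton]
  aesop

lemma card_sigma0_pair {a b : ZMod p} (ha : a ≠ 0) (hb : b ≠ 0) (hab : a ≠ b) (hsum : a + b ≠ 0) :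
    (sigma0 {a, b}).card = 4 := by
  have ha' : a + b ≠ a := fun h => hb (by simpa using h)
  have hb' : a + b ≠ b := fun h => ha (by simpa using h)
  rw [sigma0_pair hab, card_insert_of_notMem (by simp [ha.symm, hb.symm, hsum.symm]),
    card_insert_of_notMem (by simp [hab, ha'.symm]), card_pair hb'.symm]

lemma min_le_card_sigma0_union [Fact p.Prime] {A B : Finset (ZMod p)} (hAB : Disjoint A B) :
    min p ((sigma0 A).card + (sigma0 B).card - 1) ≤ (sigma0 (A ∪ B)).card :=
  sigma0_union hAB ▸ ZMod.cauchy_davenport Fact.out (sigma0_nonempty A) (sigma0_nonempty B)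

lemma min_le_card_sigma0 [Fact p.Prime] {A : Finset (ZMod p)} (h0 : (0 : ZMod p) ∉ A) :
    min p (A.card + 1) ≤ (sigma0 A).card := by
  induction A using Finset.induction_on with
  | empty =>
    have := card_pos.2 (sigma0_nonempty (∅ : Finset (ZMod p)))
    simp only [card_empty]
    omega
  | insert a A ha ih =>
    have ha0 : a ≠ 0 := fun h => h0 (h ▸ mem_insert_self a A)
    have ih := ih fun h => h0 (mem_insert_of_mem h)
    have hcd := min_le_card_sigma0_union (disjoint_singleton_left.2 ha)
    rw [card_sigma0_singleton ha0, ← insert_eq] at hcd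
    rw [card_insert_of_notMem ha]
    omega

lemma min_le_card_sigma0_of_pairs [Fact p.Prime] {ι : Type*} {A : Finset (ZMod p)}
    (h0 : (0 : ZMod p) ∉ A) {b c : ι → ZMod p} (hbc : Injective (Sum.elim b c)) (s : Finset ι)
    (hs : ∀ i ∈ s, b i ∈ A ∧ c i ∈ A ∧ b i + c i ≠ 0) :
    min p (A.card + s.card + 1) ≤ (sigma0 A).card := by
  classical
  induction s using Finset.induction_on generalizing A with
  | empty => simpa using min_le_card_sigma0 h0
  | insert i s hi ih =>
    obtain ⟨hbA, hcA, hsum⟩ := hs i (mem_insert_self i s)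
    set P : Finset (ZMod p) := {b i, c i} with hP
    have hPA : P ⊆ A := insert_subset hbA (singleton_subset_iff.2 hcA)
    have hnotP : ∀ x, x ≠ Sum.inl i → x ≠ Sum.inr i → Sum.elim b c x ∉ P := by
      intro x hxb hxc
      simp only [hP, mem_insert, mem_singleton, not_or]
      exact ⟨hbc.ne hxb, hbc.ne hxc⟩
    have hs' : ∀ j ∈ s, b j ∈ A \ P ∧ c j ∈ A \ P ∧ b j + c j ≠ 0 := by
      intro j hj
      have hji : j ≠ i := ne_of_mem_of_not_mem hj hi
      obtain ⟨hbj, hcj, hsumj⟩ := hs j (mem_insert_of_mem hj)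
      exact ⟨mem_sdiff.2 ⟨hbj, hnotP (.inl j) (by simpa using hji) Sum.inl_ne_inr⟩,
        mem_sdiff.2 ⟨hcj, hnotP (.inr j) Sum.inr_ne_inl (by simpa using hji)⟩, hsumj⟩
    have ih := ih (fun h => h0 (mem_sdiff.1 h).1) hs'
    have hb0 : b i ≠ 0 := fun h => h0 (h ▸ hbA)
    have hc0 : c i ≠ 0 := fun h => h0 (h ▸ hcA)
    have hbc_ne : b i ≠ c i := hbc.ne Sum.inl_ne_inr
    have hcd := min_le_card_sigma0_union (sdiff_disjoint : Disjoint (A \ P) P)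
    rw [sdiff_union_of_subset hPA, card_sigma0_pair hb0 hc0 hbc_ne hsum] at hcd
    have hcardA : (A \ P).card + 2 = A.card := by
      rw [← card_pair hbc_ne, card_sdiff_add_card_eq_card hPA]
    rw [card_insert_of_notMem hi]
    omega

theorem subset_sums_with_pairs (p : ℕ) [Fact p.Prime]
    (A : Finset (ZMod p)) (h0 : (0 : ZMod p) ∉ A)
    (m : ℕ) (b c : Fin m → ZMod p)
    (hb : ∀ i, b i ∈ A) (hc : ∀ i, c i ∈ A)
    (hdist : Function.Injective (fun x : Fin m ⊕ Fin m => Sum.elim b c x))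
    (hpair : ∀ i, b i ≠ c i ∧ b i + c i ≠ 0) :
    min p (A.card + m + 1) ≤ (sigma0 A).card := by
  simpa using min_le_card_sigma0_of_pairs h0 hdist univ fun i _ => ⟨hb i, hc i, (hpair i).2⟩
end
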